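/- Let f : X → 𝒢(Z,C) be a convex function and x₀ ∈ dom f. Then x₀ solves the scalarized Minty inequality (mvi_M): for all x ∈ X with f(x) ≠ f(x₀) there exists z* ∈ C⁻∖{0} with φ_{f,z*}(x) ≠ −∞ and φ′_{f,z*}(x, x₀−x) < 0, if and only if for all x ∈ dom f with f(x) ≠ f(x₀) one has cl co ⋃_{t∈(0,1)} f(x₀ + t(x−x₀)) ⊇ f(x) and cl co ⋃_{t∈(0,1)} f(x₀ + t(x−x₀)) ≠ f(x). -/

import Mathlib

open Set Pointwise

noncomputable section

variable {Z : Type*} [AddCommGroup Z] [Module ℝ Z] [TopologicalSpace Z]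

/-- The inf-residual `A ⊖ B = {z : B + {z} ⊆ A}`. -/
def resid (A B : Set Z) : Set Z := {z : Z | B + {z} ⊆ A}

/-- The recession cone `0⁺A`, with the convention `0⁺∅ = ∅`. -/
def recCone (A : Set Z) : Set Z := {z : Z | A.Nonempty ∧ A + {z} ⊆ A}

/-- `A ⊕ B = cl (A + B)`. -/
def oplus (A B : Set Z) : Set Z := closure (A + B)

/-- Membership in `𝒢(Z,C)`: `A = cl co (A + C)`. -/
def IsG (C A : Set Z) : Prop := A = closure (convexHull ℝ (A + C))

/-- The set `C⁻ \ {0}` of nonzero elements of the negative dual cone. -/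
def negDualNZ (C : Set Z) : Set (Z →L[ℝ] ℝ) :=
  {p : Z →L[ℝ] ℝ | (∀ c ∈ C, p c ≤ 0) ∧ p ≠ 0}

/-- `inf {-z*(z) : z ∈ A}` as an extended real. -/
def scal (p : Z →L[ℝ] ℝ) (A : Set Z) : EReal :=
  sInf ((fun z => ((-(p z) : ℝ) : EReal)) '' A)

/-- Support function `σ(z*|A) = sup {z*(z) : z ∈ A}` as an extended real. -/
def suppF (p : Z →L[ℝ] ℝ) (A : Set Z) : EReal :=
  sSup ((fun z => ((p z : ℝ) : EReal)) '' A)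

/-- Inf-residuation on the extended reals: `r ⊖ s = inf {t ∈ ℝ : r ≤ s + t}`. -/
def eresid (r s : EReal) : EReal :=
  sInf ((fun t : ℝ => (t : EReal)) '' {t : ℝ | r ≤ s + (t : EReal)})

variable {X : Type*} [AddCommGroup X] [Module ℝ X]

/-- The scalarization `φ_{f,z*}(x) = inf {-z*(z) : z ∈ f(x)}`. -/
def phi (f : X → Set Z) (p : Z →L[ℝ] ℝ) (x : X) : EReal := scal p (f x)

/-- Convexity for set-valued functions:
`f(t x₁ + (1-t) x₂) ⊇ cl (t f(x₁) + (1-t) f(x₂))`. -/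
def ConvexSV (f : X → Set Z) : Prop :=
  ∀ x₁ x₂ : X, ∀ t : ℝ, t ∈ Ioo (0:ℝ) 1 →
    closure (t • f x₁ + (1 - t) • f x₂) ⊆ f (t • x₁ + (1 - t) • x₂)

/-- The set-valued directional derivative
`f′(x,u) = ⋂_{t₀>0} cl co ⋃_{0<t<t₀} (1/t)•(f(x+tu) ⊖ f(x))`. -/
def sder (f : X → Set Z) (x u : X) : Set Z :=
  ⋂ t₀ ∈ Ioi (0:ℝ), closure (convexHull ℝ
    (⋃ t ∈ Ioo (0:ℝ) t₀, (1 / t) • resid (f (x + t • u)) (f x)))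

/-- The scalar Dini derivative `φ′_{f,z*}(x,u) = inf_{t>0} (1/t)(φ(x+tu) ⊖ φ(x))`. -/
def phiDer (f : X → Set Z) (p : Z →L[ℝ] ℝ) (x u : X) : EReal :=
  ⨅ t ∈ Ioi (0:ℝ), (((1 / t : ℝ)) : EReal) * eresid (phi f p (x + t • u)) (phi f p x)

end

/-!
For `z* ∈ C⁻ \ {0}` the scalarization `φ = φ_{f,z*}` of a convex set-valued map is convex, so
`φ′(x, x₀ - x) < 0` says exactly that `φ` drops somewhere on the open segment from `x` towards
`x₀`. Writing `D` for the closed convex hull of the values of `f` on that segment, convexity of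
`f` always gives `f x ⊆ D`. If `D = f x`, the scalarization cannot drop below `φ(x)` along the
segment; conversely, a point of `D \ f x` is strictly separated from the closed convex set `f x`
by some `z*`, which lies in `C⁻` because `f x + C ⊆ f x`, and separation makes `φ` drop at some
point of the segment. If `f x = ∅`, then `φ(x) = +∞` and every `z*` works.
-/

section EReal

lemma eresid_coe_neg_iff {r : EReal} {s : ℝ} : eresid r s < 0 ↔ r < s := by
  constructor
  · intro h
    obtain ⟨_, ⟨t, ht, rfl⟩, htneg⟩ := sInf_lt_iff.mp h
    calc r ≤ s + t := ht
      _ < s := by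
        rw [← EReal.coe_add, EReal.coe_lt_coe_iff]
        linarith [EReal.coe_neg'.1 htneg]
  · intro h
    obtain ⟨q, hrq, hqs⟩ := EReal.lt_iff_exists_real_btwn.mp h
    have hqs : q < s := by exact_mod_cast hqs
    calc eresid r s ≤ ((q - s : ℝ) : EReal) :=
          sInf_le ⟨q - s, by
            show r ≤ ((s : ℝ) : EReal) + ((q - s : ℝ) : EReal)
            rw [← EReal.coe_add, add_sub_cancel]; exact hrq.le, rfl⟩
      _ < 0 := by exact_mod_cast sub_neg.mpr hqs

lemma eresid_top_neg (r : EReal) : eresid r ⊤ < 0 :=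
  calc eresid r ⊤ ≤ ((-1 : ℝ) : EReal) := sInf_le ⟨-1, by simp, rfl⟩
    _ < 0 := by exact_mod_cast neg_one_lt_zero

lemma EReal.coe_mul_neg_iff_of_pos {c : ℝ} (hc : 0 < c) {e : EReal} :
    (c : EReal) * e < 0 ↔ e < 0 := by
  simp [EReal.mul_neg_iff, hc, hc.not_gt]

end EReal

section Scalarization

variable {Z : Type*} [AddCommGroup Z] [Module ℝ Z] [TopologicalSpace Z]

lemma scal_le_of_mem (p : Z →L[ℝ] ℝ) {A : Set Z} {z : Z} (hz : z ∈ A) :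
    scal p A ≤ ((-(p z) : ℝ) : EReal) :=
  sInf_le (mem_image_of_mem _ hz)

lemma scal_anti (p : Z →L[ℝ] ℝ) {A B : Set Z} (h : A ⊆ B) : scal p B ≤ scal p A :=
  sInf_le_sInf (image_mono h)

lemma coe_le_scal {p : Z →L[ℝ] ℝ} {A : Set Z} {c : ℝ} (h : ∀ z ∈ A, c ≤ -(p z)) :
    (c : EReal) ≤ scal p A :=
  le_sInf <| forall_mem_image.mpr fun z hz => EReal.coe_le_coe_iff.mpr (h z hz)

lemma scal_empty (p : Z →L[ℝ] ℝ) : scal p (∅ : Set Z) = ⊤ := by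
  simp [scal]

lemma scal_lt_top (p : Z →L[ℝ] ℝ) {A : Set Z} (h : A.Nonempty) : scal p A < ⊤ :=
  (scal_le_of_mem p h.some_mem).trans_lt (EReal.coe_lt_top _)

lemma exists_mem_lt_of_scal_lt {p : Z →L[ℝ] ℝ} {A : Set Z} {c : EReal} (h : scal p A < c) :
    ∃ z ∈ A, ((-(p z) : ℝ) : EReal) < c := by
  obtain ⟨_, ⟨z, hz, rfl⟩, hlt⟩ := sInf_lt_iff.mp h
  exact ⟨z, hz, hlt⟩

lemma scal_eq_coe_of_nonempty {p : Z →L[ℝ] ℝ} {A : Set Z} (hA : A.Nonempty)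
    (hbot : scal p A ≠ ⊥) : ∃ s : ℝ, scal p A = s :=
  ⟨(scal p A).toReal, (EReal.coe_toReal (scal_lt_top p hA).ne hbot).symm⟩

lemma phi_eq_top_of_eq_empty {X : Type*} {f : X → Set Z} (p : Z →L[ℝ] ℝ) {x : X} (hx : f x = ∅) :
    phi f p x = ⊤ := by
  rw [phi, hx, scal_empty]

end Scalarization

lemma subset_iUnion_segment {X Z : Type*} [AddCommGroup X] [Module ℝ X] (f : X → Set Z)
    {x₀ x : X} {s : ℝ} (hs : s ∈ Ioo (0:ℝ) 1) :
    f (x + s • (x₀ - x)) ⊆ ⋃ t ∈ Ioo (0:ℝ) 1, f (x₀ + t • (x - x₀)) := by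
  have hx : x + s • (x₀ - x) = x₀ + (1 - s) • (x - x₀) := by module
  rw [hx]
  exact subset_biUnion_of_mem (u := fun t => f (x₀ + t • (x - x₀)))
    (show 1 - s ∈ Ioo (0:ℝ) 1 from ⟨by linarith [hs.2], by linarith [hs.1]⟩)

section SetValued

variable {Z : Type*} [AddCommGroup Z] [Module ℝ Z] [TopologicalSpace Z]
variable {X : Type*} [AddCommGroup X] [Module ℝ X]

lemma IsG.isClosed {C A : Set Z} (h : IsG C A) : IsClosed A := by
  rw [h]; exact isClosed_closure

lemma IsG.convex [IsTopologicalAddGroup Z] [ContinuousSMul ℝ Z] {C A : Set Z} (h : IsG C A) :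
    Convex ℝ A := by
  rw [h]; exact (convex_convexHull ℝ _).closure

lemma IsG.add_mem {C A : Set Z} (h : IsG C A) {a c : Z} (ha : a ∈ A) (hc : c ∈ C) :
    a + c ∈ A := by
  rw [h]; exact subset_closure (subset_convexHull ℝ _ (add_mem_add ha hc))

lemma ConvexSV.smul_add_mem {f : X → Set Z} (hf : ConvexSV f) {x y : X} {a b : Z}
    (ha : a ∈ f y) (hb : b ∈ f x) {l : ℝ} (hl : l ∈ Ioo (0:ℝ) 1) :
    l • a + (1 - l) • b ∈ f (l • y + (1 - l) • x) :=
  hf y x l hl (subset_closure (add_mem_add (smul_mem_smul_set ha) (smul_mem_smul_set hb)))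

def segmentHull (f : X → Set Z) (x₀ x : X) : Set Z :=
  closure (convexHull ℝ (⋃ t ∈ Ioo (0:ℝ) 1, f (x₀ + t • (x - x₀))))

lemma ConvexSV.subset_segmentHull [IsTopologicalAddGroup Z] [ContinuousSMul ℝ Z]
    {f : X → Set Z} (hf : ConvexSV f) {x₀ : X} (hx₀ : (f x₀).Nonempty) (x : X) :
    f x ⊆ segmentHull f x₀ x := by
  obtain ⟨z₀, hz₀⟩ := hx₀
  intro z hz
  have hpath : Filter.Tendsto (fun t : ℝ => t • z₀ + (1 - t) • z) (nhdsWithin 0 (Ioi 0))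
      (nhds z) := by
    have hcont : Continuous fun t : ℝ => t • z₀ + (1 - t) • z := by fun_prop
    simpa using (hcont.tendsto 0).mono_left nhdsWithin_le_nhds
  refine mem_closure_of_tendsto hpath ?_
  filter_upwards [Ioo_mem_nhdsGT one_pos] with t ht
  have hpt : t • x₀ + (1 - t) • x = x + t • (x₀ - x) := by module
  exact subset_convexHull ℝ _ (subset_iUnion_segment f ht (hpt ▸ hf.smul_add_mem hz₀ hz ht))

end SetValued

section ConvexScalarization

variable {Z : Type*} [AddCommGroup Z] [Module ℝ Z] [TopologicalSpace Z]
variable {X : Type*} [AddCommGroup X] [Module ℝ X]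

lemma phiDer_neg_iff {f : X → Set Z} {p : Z →L[ℝ] ℝ} {x u : X} :
    phiDer f p x u < 0 ↔ ∃ t : ℝ, 0 < t ∧ eresid (phi f p (x + t • u)) (phi f p x) < 0 := by
  simp only [phiDer, iInf_lt_iff, mem_Ioi, exists_prop]
  exact exists_congr fun t => and_congr_right fun ht =>
    EReal.coe_mul_neg_iff_of_pos (one_div_pos.mpr ht)

lemma phiDer_neg_iff_of_phi_eq {f : X → Set Z} {p : Z →L[ℝ] ℝ} {x u : X} {s : ℝ}
    (hs : phi f p x = s) :
    phiDer f p x u < 0 ↔ ∃ t : ℝ, 0 < t ∧ phi f p (x + t • u) < phi f p x := by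
  simp only [phiDer_neg_iff, hs, eresid_coe_neg_iff]

lemma phiDer_neg_of_eq_empty {f : X → Set Z} (p : Z →L[ℝ] ℝ) {x : X} (hx : f x = ∅) (u : X) :
    phiDer f p x u < 0 :=
  phiDer_neg_iff.mpr ⟨1, one_pos, phi_eq_top_of_eq_empty p hx ▸ eresid_top_neg _⟩

lemma ConvexSV.phi_lt_of_phi_eq {f : X → Set Z} (hf : ConvexSV f) {p : Z →L[ℝ] ℝ} {x y : X}
    {s : ℝ} (hx : phi f p x = s) (hy : phi f p y < s) {l : ℝ} (hl : l ∈ Ioo (0:ℝ) 1) :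
    phi f p (l • y + (1 - l) • x) < s := by
  obtain ⟨a, ha, hpa⟩ := exists_mem_lt_of_scal_lt hy
  have hpa : -p a < s := by exact_mod_cast hpa
  have h1l : 0 < 1 - l := sub_pos.mpr hl.2
  -- `ε` is chosen so that `l • a + (1 - l) • b` beats `s` as soon as `-p b < s + ε`
  set ε := l * (s + p a) / (1 - l)
  have hε : (1 - l) * ε = l * (s + p a) := mul_div_cancel₀ _ h1l.ne'
  have hb : scal p (f x) < ((s + ε : ℝ) : EReal) := by
    rw [← phi, hx, EReal.coe_lt_coe_iff]
    linarith [div_pos (mul_pos hl.1 (by linarith : 0 < s + p a)) h1l]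
  obtain ⟨b, hb, hpb⟩ := exists_mem_lt_of_scal_lt hb
  have hpb : -p b < s + ε := by exact_mod_cast hpb
  calc phi f p (l • y + (1 - l) • x) ≤ ((-p (l • a + (1 - l) • b) : ℝ) : EReal) :=
        scal_le_of_mem p (hf.smul_add_mem ha hb hl)
    _ < s := by
        rw [EReal.coe_lt_coe_iff, map_add, map_smul, map_smul, smul_eq_mul, smul_eq_mul]
        nlinarith [mul_lt_mul_of_pos_left hpb h1l]

lemma ConvexSV.exists_mem_Ioo_phi_lt {f : X → Set Z} (hf : ConvexSV f) {p : Z →L[ℝ] ℝ}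
    {x u : X} {s : ℝ} (hx : phi f p x = s) {t : ℝ} (ht : 0 < t)
    (hdrop : phi f p (x + t • u) < phi f p x) :
    ∃ r ∈ Ioo (0:ℝ) 1, phi f p (x + r • u) < phi f p x := by
  have hl : 1 / (t + 1) ∈ Ioo (0:ℝ) 1 :=
    ⟨by positivity, (div_lt_one (by positivity)).mpr (by linarith)⟩
  refine ⟨t / (t + 1), ⟨by positivity, (div_lt_one (by positivity)).mpr (by linarith)⟩, ?_⟩
  have hpt : (1 / (t + 1)) • (x + t • u) + (1 - 1 / (t + 1)) • x = x + (t / (t + 1)) • u := by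
    match_scalars
    · field_simp; ring
    · field_simp
  rw [← hpt, hx]
  exact hf.phi_lt_of_phi_eq hx (hx ▸ hdrop) hl

end ConvexScalarization

section Minty

variable {Z : Type*} [AddCommGroup Z] [Module ℝ Z] [TopologicalSpace Z]
variable {X : Type*} [AddCommGroup X] [Module ℝ X]

lemma ConvexSV.segmentHull_ne_of_phiDer_neg {f : X → Set Z} (hf : ConvexSV f)
    {p : Z →L[ℝ] ℝ} {x₀ x : X} (hx : (f x).Nonempty) (hbot : phi f p x ≠ ⊥)
    (hder : phiDer f p x (x₀ - x) < 0) : segmentHull f x₀ x ≠ f x := by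
  obtain ⟨s, hs⟩ := scal_eq_coe_of_nonempty hx hbot
  obtain ⟨t, ht, hdrop⟩ := (phiDer_neg_iff_of_phi_eq hs).mp hder
  obtain ⟨r, hr, hdrop⟩ := hf.exists_mem_Ioo_phi_lt hs ht hdrop
  intro hD
  have hsub : f (x + r • (x₀ - x)) ⊆ f x :=
    hD ▸ (subset_iUnion_segment f hr).trans ((subset_convexHull ℝ _).trans subset_closure)
  exact (scal_anti p hsub).not_gt hdrop

lemma IsG.exists_negDualNZ_separating [IsTopologicalAddGroup Z] [ContinuousSMul ℝ Z]
    [LocallyConvexSpace ℝ Z] {C A : Set Z} (hA : IsG C A)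
    (hCcone : ∀ c ∈ C, ∀ r : ℝ, 0 < r → r • c ∈ C) (hne : A.Nonempty) {z : Z} (hz : z ∉ A) :
    ∃ p ∈ negDualNZ C, ∃ u : ℝ, (∀ a ∈ A, p a < u) ∧ u < p z := by
  obtain ⟨p, u, hpA, hpz⟩ := geometric_hahn_banach_closed_point hA.convex hA.isClosed hz
  obtain ⟨a, ha⟩ := hne
  refine ⟨p, ⟨fun c hc => ?_, fun h0 => ?_⟩, u, hpA, hpz⟩
  · -- otherwise `p` would be unbounded above on the ray `a + ℝ₊ c ⊆ A`
    by_contra! hpc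
    have hr : 0 < (u - p a) / p c := div_pos (by linarith [hpA a ha]) hpc
    have hray := hpA _ (hA.add_mem ha (hCcone c hc _ hr))
    rw [map_add, map_smul, smul_eq_mul, div_mul_cancel₀ _ hpc.ne'] at hray
    linarith
  · have hpa := hpA a ha
    simp only [h0, zero_apply] at hpa hpz
    linarith

lemma exists_phiDer_neg_of_ssubset_segmentHull [IsTopologicalAddGroup Z] [ContinuousSMul ℝ Z]
    [LocallyConvexSpace ℝ Z] {C : Set Z} (hCcone : ∀ c ∈ C, ∀ r : ℝ, 0 < r → r • c ∈ C)
    {f : X → Set Z} (hG : ∀ x, IsG C (f x)) {x₀ x : X} (hx : (f x).Nonempty)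
    (hsub : f x ⊆ segmentHull f x₀ x) (hne : segmentHull f x₀ x ≠ f x) :
    ∃ p ∈ negDualNZ C, phi f p x ≠ ⊥ ∧ phiDer f p x (x₀ - x) < 0 := by
  obtain ⟨z, hzD, hzx⟩ := exists_of_ssubset (hsub.ssubset_of_ne hne.symm)
  obtain ⟨p, hp, u, hpA, hpz⟩ := (hG x).exists_negDualNZ_separating hCcone hx hzx
  have hlow : ((-u : ℝ) : EReal) ≤ phi f p x := coe_le_scal fun a ha => by linarith [hpA a ha]
  have hbot : phi f p x ≠ ⊥ := ne_bot_of_le_ne_bot (EReal.coe_ne_bot _) hlow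
  obtain ⟨s, hs⟩ := scal_eq_coe_of_nonempty hx hbot
  obtain ⟨w, hw, hpw⟩ : ∃ w ∈ ⋃ t ∈ Ioo (0:ℝ) 1, f (x₀ + t • (x - x₀)), u < p w := by
    by_contra! h
    refine hpz.not_ge (closure_minimal (convexHull_min h ?_) ?_ hzD)
    · exact convex_halfSpace_le p.toLinearMap.isLinear u
    · exact isClosed_le p.continuous continuous_const
  obtain ⟨t, ht, hwt⟩ := mem_iUnion₂.mp hw
  refine ⟨p, hp, hbot, (phiDer_neg_iff_of_phi_eq hs).mpr ⟨1 - t, sub_pos.mpr ht.2, ?_⟩⟩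
  have hpt : x + (1 - t) • (x₀ - x) = x₀ + t • (x - x₀) := by module
  calc phi f p (x + (1 - t) • (x₀ - x)) ≤ ((-p w : ℝ) : EReal) := hpt ▸ scal_le_of_mem p hwt
    _ < ((-u : ℝ) : EReal) := EReal.coe_lt_coe_iff.mpr (by linarith)
    _ ≤ phi f p x := hlow

end Minty

theorem stmt_17_general
  {Z : Type*} [AddCommGroup Z] [Module ℝ Z] [TopologicalSpace Z]
  [IsTopologicalAddGroup Z] [ContinuousSMul ℝ Z] [LocallyConvexSpace ℝ Z]
  {X : Type*} [AddCommGroup X] [Module ℝ X]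
  (C : Set Z)
  (hCcone : ∀ c ∈ C, ∀ r : ℝ, 0 < r → r • c ∈ C)
  (hdual : (negDualNZ C).Nonempty)
  (f : X → Set Z) (hG : ∀ x, IsG C (f x)) (hf : ConvexSV f)
  (x₀ : X) (hx₀ : (f x₀).Nonempty) :
    (∀ x : X, f x ≠ f x₀ →
      ∃ p ∈ negDualNZ C, phi f p x ≠ ⊥ ∧ phiDer f p x (x₀ - x) < 0) ↔
    (∀ x : X, (f x).Nonempty → f x ≠ f x₀ →
      f x ⊆ closure (convexHull ℝ (⋃ t ∈ Ioo (0:ℝ) 1, f (x₀ + t • (x - x₀))))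
      ∧ closure (convexHull ℝ (⋃ t ∈ Ioo (0:ℝ) 1, f (x₀ + t • (x - x₀)))) ≠ f x) := by
  constructor
  · intro hmvi x hx hne
    obtain ⟨p, -, hbot, hder⟩ := hmvi x hne
    exact ⟨hf.subset_segmentHull hx₀ x, hf.segmentHull_ne_of_phiDer_neg hx hbot hder⟩
  · intro hsegment x hne
    rcases (f x).eq_empty_or_nonempty with hx | hx
    · obtain ⟨p, hp⟩ := hdual
      exact ⟨p, hp, phi_eq_top_of_eq_empty p hx ▸ top_ne_bot, phiDer_neg_of_eq_empty p hx _⟩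
    · obtain ⟨hsub, hD⟩ := hsegment x hx hne
      exact exists_phiDer_neg_of_ssubset_segmentHull hCcone hG hx hsub hD

theorem stmt_17
  {Z : Type*} [AddCommGroup Z] [Module ℝ Z] [TopologicalSpace Z]
  [IsTopologicalAddGroup Z] [ContinuousSMul ℝ Z] [LocallyConvexSpace ℝ Z] [T2Space Z]
  {X : Type*} [AddCommGroup X] [Module ℝ X]
  (C : Set Z) (hCclosed : IsClosed C) (hCconv : Convex ℝ C)
  (hCcone : ∀ c ∈ C, ∀ r : ℝ, 0 < r → r • c ∈ C) (hC0 : (0:Z) ∈ C)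
  (hdual : (negDualNZ C).Nonempty)
  (f : X → Set Z) (hG : ∀ x, IsG C (f x)) (hf : ConvexSV f)
  (x₀ : X) (hx₀ : (f x₀).Nonempty) :
    (∀ x : X, f x ≠ f x₀ →
      ∃ p ∈ negDualNZ C, phi f p x ≠ ⊥ ∧ phiDer f p x (x₀ - x) < 0) ↔
    (∀ x : X, (f x).Nonempty → f x ≠ f x₀ →
      f x ⊆ closure (convexHull ℝ (⋃ t ∈ Ioo (0:ℝ) 1, f (x₀ + t • (x - x₀))))
      ∧ closure (convexHull ℝ (⋃ t ∈ Ioo (0:ℝ) 1, f (x₀ + t • (x - x₀)))) ≠ f x) :=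
  stmt_17_general C hCcone hdual f hG hf x₀ hx₀
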